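/- arXiv:2109.07117 — 2 statements merged into one kernel-verified Lean document; each statement's English description precedes it below -/
import Mathlib

section
/- Let (γ_t)_{t≥1} and (η_t)_{t≥1} be positive real sequences, ω > 0, and k ≤ t natural numbers. Then ∑_{i=k}^{t} (∏_{j=i+1}^{t} (1 + ω γ_j)) · η_i γ_i ≤ (1/ω) · (max_{k ≤ i ≤ t} η_i) · exp(ω ∑_{j=k}^{t} γ_j). -/
open Finset

lemma tele (γ : ℕ → ℝ) (ω : ℝ) (k t : ℕ) (hkt : k ≤ t) :
    ∑ i ∈ Icc k t, ω * γ i * ∏ j ∈ Icc (i + 1) t, (1 + ω * γ j)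
      = ∏ j ∈ Icc k t, (1 + ω * γ j) - 1 := by
  induction t, hkt using Nat.le_induction with
  | base =>
    rw [Icc_self, sum_singleton, prod_singleton, Icc_eq_empty (by omega), prod_empty]
    ring
  | succ t ht ih =>
    have hins : Icc k (t + 1) = insert (t + 1) (Icc k t) := by
      exact (Finset.insert_Icc_right_eq_Icc_add_one (by omega)).symm
    have hnm : t + 1 ∉ Icc k t := by simp
    rw [hins, sum_insert hnm, prod_insert hnm, Icc_eq_empty (by omega), prod_empty,
      mul_one]
    have hsum : ∑ i ∈ Icc k t, ω * γ i * ∏ j ∈ Icc (i + 1) (t + 1), (1 + ω * γ j)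
        = (1 + ω * γ (t + 1)) *
          ∑ i ∈ Icc k t, ω * γ i * ∏ j ∈ Icc (i + 1) t, (1 + ω * γ j) := by
      rw [mul_sum]
      refine sum_congr rfl fun i hi => ?_
      have hi' := (mem_Icc.mp hi).2
      have : Icc (i + 1) (t + 1) = insert (t + 1) (Icc (i + 1) t) := by
        exact (Finset.insert_Icc_right_eq_Icc_add_one (by omega)).symm
      rw [this, prod_insert (by simp)]
      ring
    rw [hsum, ih]
    ring

theorem sum_prod_eta_upper_bound (γ η : ℕ → ℝ)
    (hγ : ∀ t, 1 ≤ t → 0 < γ t) (hη : ∀ t, 1 ≤ t → 0 < η t)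
    (k t : ℕ) (hk : 1 ≤ k) (hkt : k ≤ t) (ω : ℝ) (hω : 0 < ω) :
    ∑ i ∈ Icc k t, (∏ j ∈ Icc (i + 1) t, (1 + ω * γ j)) * (η i * γ i)
      ≤ (1 / ω) * ((Icc k t).sup' (nonempty_Icc.mpr hkt) η)
          * Real.exp (ω * ∑ j ∈ Icc k t, γ j) := by
  set M := (Icc k t).sup' (nonempty_Icc.mpr hkt) η with hM
  have hγpos : ∀ j ∈ Icc k t, 0 < γ j := fun j hj => hγ j (by
    have := (mem_Icc.mp hj).1; omega)
  have hprodpos : ∀ i, (0:ℝ) ≤ ∏ j ∈ Icc (i+1) t, (1 + ω * γ j) := by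
    intro i
    refine prod_nonneg fun j hj => ?_
    have := hγ j (by have := (mem_Icc.mp hj).1; omega)
    nlinarith
  have hMle : ∀ i ∈ Icc k t, η i ≤ M := fun i hi => le_sup' η hi
  have step1 : ∑ i ∈ Icc k t, (∏ j ∈ Icc (i + 1) t, (1 + ω * γ j)) * (η i * γ i)
      ≤ ∑ i ∈ Icc k t, (M / ω) * (ω * γ i * ∏ j ∈ Icc (i + 1) t, (1 + ω * γ j)) := by
    refine sum_le_sum fun i hi => ?_
    have h1 := hMle i hi
    have h2 := hγpos i hi
    have h3 := hprodpos i
    have : (M / ω) * (ω * γ i * ∏ j ∈ Icc (i + 1) t, (1 + ω * γ j))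
        = (∏ j ∈ Icc (i + 1) t, (1 + ω * γ j)) * (M * γ i) := by
      field_simp
    rw [this]
    exact mul_le_mul_of_nonneg_left (by nlinarith) h3
  rw [← mul_sum, tele γ ω k t hkt] at step1
  have hMpos : 0 < M := lt_of_lt_of_le (hη k hk) (hMle k (by simp [mem_Icc, hkt]))
  have hexp : ∏ j ∈ Icc k t, (1 + ω * γ j) ≤ Real.exp (ω * ∑ j ∈ Icc k t, γ j) := by
    rw [mul_sum, Real.exp_sum]
    exact prod_le_prod (fun j hj => by nlinarith [hγpos j hj])
      (fun j hj => by linarith [Real.add_one_le_exp (ω * γ j)])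
  calc _ ≤ M / ω * (∏ j ∈ Icc k t, (1 + ω * γ j) - 1) := step1
    _ ≤ M / ω * Real.exp (ω * ∑ j ∈ Icc k t, γ j) := by
        apply mul_le_mul_of_nonneg_left (by linarith) (by positivity)
    _ = (1 / ω) * M * Real.exp (ω * ∑ j ∈ Icc k t, γ j) := by ring
end

section
/- Let (γ_t)_{t≥1} and (η_t)_{t≥1} be positive real sequences, ω > 0, and k ≤ t natural numbers such that ω γ_i ≤ 1 for all i ≥ k. Then ∑_{i=k}^{t} (∏_{j=i+1}^{t} (1 − ω γ_j)) · η_i γ_i ≤ (1/ω) · max_{k ≤ i ≤ t} η_i. -/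
open Finset

lemma telescope_aux (a : ℕ → ℝ) (k t : ℕ) (hkt : k ≤ t) :
    ∑ i ∈ Icc k t, (∏ j ∈ Icc (i + 1) t, a j) * (1 - a i)
      = 1 - ∏ j ∈ Icc k t, a j := by
  induction t, hkt using Nat.le_induction with
  | base =>
    simp [Finset.Icc_self, Finset.Icc_eq_empty_of_lt (Nat.lt_succ_self k)]
  | succ t ht ih =>
    rw [Finset.sum_Icc_succ_top (le_trans ht (Nat.le_succ t)),
      Finset.prod_Icc_succ_top (le_trans ht (Nat.le_succ t))]
    have h1 : ∀ i ∈ Icc k t,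
        (∏ j ∈ Icc (i + 1) (t + 1), a j) * (1 - a i)
          = a (t + 1) * ((∏ j ∈ Icc (i + 1) t, a j) * (1 - a i)) := by
      intro i hi
      rw [Finset.prod_Icc_succ_top (Nat.succ_le_succ (mem_Icc.mp hi).2)]
      ring
    rw [Finset.sum_congr rfl h1, ← Finset.mul_sum, ih,
      Finset.Icc_eq_empty_of_lt (Nat.lt_succ_self (t + 1))]
    simp; ring

theorem sum_prod_minus_eta_upper_bound (γ η : ℕ → ℝ)
    (hγ : ∀ t, 1 ≤ t → 0 < γ t) (hη : ∀ t, 1 ≤ t → 0 < η t)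
    (k t : ℕ) (hk : 1 ≤ k) (hkt : k ≤ t) (ω : ℝ) (hω : 0 < ω)
    (hωγ : ∀ i, k ≤ i → ω * γ i ≤ 1) :
    ∑ i ∈ Icc k t, (∏ j ∈ Icc (i + 1) t, (1 - ω * γ j)) * (η i * γ i)
      ≤ (1 / ω) * ((Icc k t).sup' (nonempty_Icc.mpr hkt) η) := by
  set M := (Icc k t).sup' (nonempty_Icc.mpr hkt) η with hM
  have hprod_nonneg : ∀ i, k ≤ i → 0 ≤ ∏ j ∈ Icc (i + 1) t, (1 - ω * γ j) := by
    intro i hi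
    apply Finset.prod_nonneg
    intro j hj
    have : k ≤ j := le_trans hi (le_trans (Nat.le_succ i) (mem_Icc.mp hj).1)
    linarith [hωγ j this]
  have hηM : ∀ i ∈ Icc k t, η i ≤ M := fun i hi => Finset.le_sup' η hi
  -- Step 1: pointwise bound
  have step1 : ∑ i ∈ Icc k t, (∏ j ∈ Icc (i + 1) t, (1 - ω * γ j)) * (η i * γ i)
      ≤ ∑ i ∈ Icc k t, (M / ω) * ((∏ j ∈ Icc (i + 1) t, (1 - ω * γ j)) * (ω * γ i)) := by
    apply Finset.sum_le_sum
    intro i hi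
    have hik : k ≤ i := (mem_Icc.mp hi).1
    have hγi : 0 < γ i := hγ i (le_trans hk hik)
    have hp := hprod_nonneg i hik
    have : (∏ j ∈ Icc (i + 1) t, (1 - ω * γ j)) * (η i * γ i)
        ≤ (∏ j ∈ Icc (i + 1) t, (1 - ω * γ j)) * (M * γ i) := by
      apply mul_le_mul_of_nonneg_left _ hp
      exact mul_le_mul_of_nonneg_right (hηM i hi) hγi.le
    calc _ ≤ (∏ j ∈ Icc (i + 1) t, (1 - ω * γ j)) * (M * γ i) := this
      _ = (M / ω) * ((∏ j ∈ Icc (i + 1) t, (1 - ω * γ j)) * (ω * γ i)) := by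
          field_simp
  -- Step 2: telescoping sum
  have step2 : ∑ i ∈ Icc k t, (∏ j ∈ Icc (i + 1) t, (1 - ω * γ j)) * (ω * γ i)
      = 1 - ∏ j ∈ Icc k t, (1 - ω * γ j) := by
    have := telescope_aux (fun j => 1 - ω * γ j) k t hkt
    simp only [sub_sub_cancel] at this
    exact this
  have hMpos : 0 < M := lt_of_lt_of_le (hη k hk) (hηM k (mem_Icc.mpr ⟨le_refl k, hkt⟩))
  have hbig : 0 ≤ ∏ j ∈ Icc k t, (1 - ω * γ j) := by
    apply Finset.prod_nonneg
    intro j hj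
    linarith [hωγ j (mem_Icc.mp hj).1]
  calc _ ≤ ∑ i ∈ Icc k t, (M / ω) * ((∏ j ∈ Icc (i + 1) t, (1 - ω * γ j)) * (ω * γ i)) := step1
    _ = (M / ω) * (1 - ∏ j ∈ Icc k t, (1 - ω * γ j)) := by rw [← Finset.mul_sum, step2]
    _ ≤ (M / ω) * 1 := by
        apply mul_le_mul_of_nonneg_left (by linarith) (by positivity)
    _ = (1 / ω) * M := by ring
end
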